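/- arXiv:0803.3716 — 6 statements merged into one kernel-verified Lean document; each statement's English description precedes it below -/
import Mathlib

section
/- Suppose P{M = 0} = 0, P{Q = 0} < 1, P{Q + Mc = c} < 1 for every c ∈ ℝ, and the perpetuity series Z∞ = Σ_{k≥1} Π_{k−1} Q_k converges almost surely. Then the distribution of Z∞ has no atoms, i.e., P{Z∞ = x} = 0 for every x ∈ ℝ. -/
/-!
Splitting off the first term, `Z∞ = Q₁ + M₁ Z'` where `Z' =ᵈ Z∞` is independent of `(M₁, Q₁)`,
so the atom masses `f x = P{Z∞ = x}` satisfy `f x = E f ((x - Q) / M)`. Only finitely many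
atoms have maximal mass, and this identity forces the affine map `y ↦ (y - Q) / M` to permute
them almost surely. It then fixes their mean `c`, i.e. `Q + M c = c` almost surely, which the
non-degeneracy hypothesis excludes.
-/

open MeasureTheory ProbabilityTheory Filter Finset

open scoped ENNReal Topology

lemma Finset.sum_comp_eq_sum_of_mapsTo {α β : Type*} [AddCommMonoid β] {A : Finset α}
    {g : α → α} (hmaps : ∀ a ∈ A, g a ∈ A) (hinj : Set.InjOn g A) (f : α → β) :
    ∑ a ∈ A, f (g a) = ∑ a ∈ A, f a :=
  sum_nbij g hmaps hinj
    ((A.finite_toSet.injOn_iff_bijOn_of_mapsTo hmaps).1 hinj).surjOn fun _ _ => rfl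

lemma Finset.add_mul_mean_eq_mean_of_mapsTo {A : Finset ℝ} (hA : A.Nonempty) {m q : ℝ}
    (hm : m ≠ 0) (hmaps : ∀ y ∈ A, (y - q) / m ∈ A) :
    q + m * ((∑ y ∈ A, y) / #A) = (∑ y ∈ A, y) / #A := by
  have hinj : Set.InjOn (fun y => (y - q) / m) A := fun a _ b _ hab => by
    simpa [div_left_inj' hm] using hab
  have hsum := sum_comp_eq_sum_of_mapsTo hmaps hinj fun y => y
  rw [← sum_div, sum_sub_distrib, sum_const, nsmul_eq_mul, div_eq_iff hm] at hsum
  have hcard : (#A : ℝ) ≠ 0 := Nat.cast_ne_zero.2 hA.card_pos.ne'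
  field_simp
  linarith

section Atoms

variable {α : Type*} [MeasurableSpace α] [MeasurableSingletonClass α]
  (ρ : Measure α) [IsFiniteMeasure ρ]

lemma finite_setOf_le_measure_singleton {ε : ℝ≥0∞} (hε : 0 < ε) : {x | ε ≤ ρ {x}}.Finite :=
  Measure.finite_const_le_meas_of_disjoint_iUnion ρ hε (fun _ => measurableSet_singleton _)
    (fun _ _ h => Set.disjoint_singleton.2 h) (measure_ne_top _ _)

lemma exists_measure_singleton_eq_iSup (h : (⨆ x, ρ {x}) ≠ 0) : ∃ x, ρ {x} = ⨆ y, ρ {y} := by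
  set p := ⨆ y, ρ {y}
  have hp : p ≠ ∞ := ne_top_of_le_ne_top (measure_ne_top ρ Set.univ)
    (iSup_le fun y => measure_mono (Set.subset_univ _))
  obtain ⟨x₀, hx₀⟩ := lt_iSup_iff.1 (ENNReal.half_lt_self h hp)
  obtain ⟨x, hx, hmax⟩ := Set.exists_max_image _ (fun y => ρ {y})
    (finite_setOf_le_measure_singleton ρ (ENNReal.half_pos h)) ⟨x₀, hx₀.le⟩
  refine ⟨x, le_antisymm (le_iSup (fun y => ρ {y}) x) (iSup_le fun y => ?_)⟩
  by_cases hy : p / 2 ≤ ρ {y}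
  · exact hmax y hy
  · exact (not_le.1 hy).le.trans hx

end Atoms

/-- `(ν.prod ρ).map affineAction = ρ` says that `ρ` is the law of a solution of `Z =ᵈ Q + M Z`
with `(M, Q) ∼ ν` independent of `Z`. -/
def affineAction (w : (ℝ × ℝ) × ℝ) : ℝ :=
  w.1.2 + w.1.1 * w.2

@[fun_prop]
lemma measurable_affineAction : Measurable affineAction := by
  unfold affineAction
  fun_prop

section AffineFixedPoint

variable {ν : Measure (ℝ × ℝ)} {ρ : Measure ℝ}

lemma measure_singleton_eq_lintegral_of_map_affineAction [SFinite ν] [SFinite ρ]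
    (hfix : (ν.prod ρ).map affineAction = ρ) (hν : ∀ᵐ p ∂ν, p.1 ≠ 0) (x : ℝ) :
    ρ {x} = ∫⁻ p, ρ {(x - p.2) / p.1} ∂ν := by
  have hx : MeasurableSet (affineAction ⁻¹' {x}) :=
    measurable_affineAction (measurableSet_singleton x)
  calc ρ {x} = ν.prod ρ (affineAction ⁻¹' {x}) := by
        rw [← Measure.map_apply measurable_affineAction (measurableSet_singleton x), hfix]
    _ = ∫⁻ p, ρ {(x - p.2) / p.1} ∂ν := by
        rw [Measure.prod_apply hx]
        refine lintegral_congr_ae (hν.mono fun p hp => congrArg ρ (Set.ext fun z => ?_))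
        simp only [affineAction, Set.mem_preimage, Set.mem_singleton_iff, eq_div_iff hp]
        constructor <;> intro h <;> linarith

lemma ae_iSup_le_measure_singleton_of_map_affineAction [IsProbabilityMeasure ν]
    [IsFiniteMeasure ρ] (hfix : (ν.prod ρ).map affineAction = ρ) (hν : ∀ᵐ p ∂ν, p.1 ≠ 0)
    {y : ℝ} (hy : (⨆ z, ρ {z}) ≤ ρ {y}) :
    ∀ᵐ p ∂ν, (⨆ z, ρ {z}) ≤ ρ {(y - p.2) / p.1} := by
  have hint := measure_singleton_eq_lintegral_of_map_affineAction hfix hν y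
  have hconst := ae_eq_of_ae_le_of_lintegral_le
    (ae_of_all ν fun p => le_iSup (fun z => ρ {z}) ((y - p.2) / p.1))
    (hint ▸ measure_ne_top ρ {y}) aemeasurable_const
    (by rwa [lintegral_const, measure_univ, mul_one, ← hint])
  exact hconst.mono fun p hp => hp.ge

theorem measure_singleton_eq_zero_of_map_affineAction [IsProbabilityMeasure ν]
    [IsFiniteMeasure ρ] (hfix : (ν.prod ρ).map affineAction = ρ) (hν0 : ν {p | p.1 = 0} = 0)
    (hdeg : ∀ c : ℝ, ν {p | p.2 + p.1 * c = c} < 1) (x : ℝ) :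
    ρ {x} = 0 := by
  have hν : ∀ᵐ p ∂ν, p.1 ≠ 0 := measure_eq_zero_iff_ae_notMem.1 hν0
  by_contra hx
  set p₀ := ⨆ z, ρ {z}
  have hp₀ : p₀ ≠ 0 := fun h => hx (nonpos_iff_eq_zero.1 (h ▸ le_iSup (fun z => ρ {z}) x))
  have hfin := finite_setOf_le_measure_singleton ρ (pos_iff_ne_zero.2 hp₀)
  set A := hfin.toFinset
  have hA : A.Nonempty := by
    obtain ⟨y, hy⟩ := exists_measure_singleton_eq_iSup ρ hp₀
    exact ⟨y, hfin.mem_toFinset.2 hy.ge⟩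
  have hmaps : ∀ᵐ p ∂ν, p.1 ≠ 0 ∧ ∀ y ∈ A, (y - p.2) / p.1 ∈ A := by
    refine hν.and ((eventually_all_finset A).2 fun y hy => ?_)
    filter_upwards [ae_iSup_le_measure_singleton_of_map_affineAction hfix hν
      (hfin.mem_toFinset.1 hy)] with p hp using hfin.mem_toFinset.2 hp
  set c := (∑ y ∈ A, y) / #A
  have hc : ∀ᵐ p ∂ν, p.2 + p.1 * c = c :=
    hmaps.mono fun p hp => add_mul_mean_eq_mean_of_mapsTo hA hp.1 hp.2
  refine (hdeg c).ne ?_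
  rw [← prob_compl_eq_zero_iff (by measurability)]
  exact ae_iff.1 hc

end AffineFixedPoint

namespace ProbabilityTheory.iIndepFun

variable {Ω β : Type*} [MeasurableSpace Ω] [MeasurableSpace β] {μ : Measure Ω}
  {X : ℕ → Ω → β}

lemma map_shift_eq (hX : ∀ n, Measurable (X n)) (h : iIndepFun X μ)
    (hid : ∀ n, IdentDistrib (X n) (X 0) μ μ) :
    μ.map (fun ω n => X (n + 1) ω) = μ.map (fun ω n => X n ω) := by
  rw [(h.precomp (add_left_injective 1)).map_fun_eq_infinitePi_map (fun n => hX (n + 1)),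
    h.map_fun_eq_infinitePi_map hX]
  congr 1
  funext n
  exact (hid (n + 1)).map_eq.trans (hid n).map_eq.symm

lemma indepFun_shift (hX : ∀ n, Measurable (X n)) (h : iIndepFun X μ) :
    IndepFun (X 0) (fun ω n => X (n + 1) ω) μ := by
  have := h.isProbabilityMeasure
  refine IndepFun.indepFun_process (hX 0) (fun n => hX (n + 1)) fun I => ?_
  have hdisj : Disjoint {0} (I.map ⟨(· + 1), add_left_injective 1⟩) := by simp
  exact (h.indepFun_finset _ _ hdisj hX).comp (measurable_pi_apply ⟨0, mem_singleton_self 0⟩)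
    (measurable_pi_lambda (fun x (i : I) => x ⟨i + 1, mem_map_of_mem _ i.2⟩)
      fun i => measurable_pi_apply _)

end ProbabilityTheory.iIndepFun

section Perpetuity

def perpetuitySum (n : ℕ) (s : ℕ → ℝ × ℝ) : ℝ :=
  ∑ k ∈ range n, (∏ i ∈ range k, (s i).1) * (s k).2

noncomputable def perpetuity (s : ℕ → ℝ × ℝ) : ℝ :=
  limUnder atTop fun n => perpetuitySum n s

@[fun_prop]
lemma measurable_perpetuitySum (n : ℕ) : Measurable (perpetuitySum n) := by
  unfold perpetuitySum
  fun_prop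

lemma measurable_perpetuity : Measurable perpetuity :=
  (StronglyMeasurable.limUnder fun n => (measurable_perpetuitySum n).stronglyMeasurable).measurable

lemma perpetuitySum_succ (n : ℕ) (s : ℕ → ℝ × ℝ) :
    perpetuitySum (n + 1) s = (s 0).2 + (s 0).1 * perpetuitySum n (fun i => s (i + 1)) := by
  simp only [perpetuitySum, sum_range_succ', prod_range_succ', prod_range_zero, mul_sum]
  rw [add_comm, one_mul]
  congr 1
  exact sum_congr rfl fun k _ => by ring

lemma tendsto_perpetuitySum_shift {s : ℕ → ℝ × ℝ} {z : ℝ} (hs0 : (s 0).1 ≠ 0)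
    (hs : Tendsto (fun n => perpetuitySum n s) atTop (𝓝 z)) :
    Tendsto (fun n => perpetuitySum n fun i => s (i + 1)) atTop
      (𝓝 ((z - (s 0).2) / (s 0).1)) := by
  refine (((tendsto_add_atTop_iff_nat 1).2 hs).sub_const _).div_const _ |>.congr fun n => ?_
  rw [perpetuitySum_succ]
  field_simp
  ring

lemma map_affineAction_prod_eq_of_tendsto_perpetuitySum {Ω : Type*} [MeasurableSpace Ω]
    {μ : Measure Ω} [IsProbabilityMeasure μ] {X : ℕ → Ω → ℝ × ℝ} (hX : ∀ n, Measurable (X n))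
    (hindep : iIndepFun X μ) (hid : ∀ n, IdentDistrib (X n) (X 0) μ μ)
    (hX0 : ∀ᵐ ω ∂μ, (X 0 ω).1 ≠ 0) {Z : Ω → ℝ}
    (hconv : ∀ᵐ ω ∂μ, Tendsto (fun n => perpetuitySum n fun k => X k ω) atTop (𝓝 (Z ω))) :
    ((μ.map (X 0)).prod (μ.map Z)).map affineAction = μ.map Z := by
  set Z' : Ω → ℝ := fun ω => perpetuity fun n => X (n + 1) ω
  have hXm : Measurable fun ω n => X n ω := measurable_pi_lambda _ hX
  have hX'm : Measurable fun ω n => X (n + 1) ω := measurable_pi_lambda _ fun n => hX (n + 1)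
  have hZ'm : Measurable Z' := measurable_perpetuity.comp hX'm
  have hZ_eq : ∀ᵐ ω ∂μ, affineAction (X 0 ω, Z' ω) = Z ω := by
    filter_upwards [hconv, hX0] with ω hω h0
    rw [affineAction, show Z' ω = _ from (tendsto_perpetuitySum_shift h0 hω).limUnder_eq]
    field_simp
    ring
  have hlaw : μ.map Z' = μ.map Z := by
    calc μ.map Z' = (μ.map fun ω n => X (n + 1) ω).map perpetuity :=
          (Measure.map_map measurable_perpetuity hX'm).symm
      _ = (μ.map fun ω n => X n ω).map perpetuity := by rw [hindep.map_shift_eq hX hid]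
      _ = μ.map Z := (Measure.map_map measurable_perpetuity hXm).trans
          (Measure.map_congr (hconv.mono fun ω hω => hω.limUnder_eq))
  have hind : IndepFun (X 0) Z' μ :=
    (hindep.indepFun_shift hX).comp measurable_id measurable_perpetuity
  calc _ = (μ.map fun ω => (X 0 ω, Z' ω)).map affineAction := by
        rw [← hlaw, (indepFun_iff_map_prod_eq_prod_map_map (hX 0).aemeasurable
          hZ'm.aemeasurable).1 hind]
    _ = μ.map Z := by
        rw [Measure.map_map measurable_affineAction ((hX 0).prodMk hZ'm)]
        exact Measure.map_congr hZ_eq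

end Perpetuity

theorem perpetuity_no_atoms_general
    {Ω : Type*} [MeasurableSpace Ω] (μ : Measure Ω) [IsProbabilityMeasure μ]
    (M Q : ℕ → Ω → ℝ)
    (hM : ∀ n, Measurable (M n)) (hQ : ∀ n, Measurable (Q n))
    (hindep : iIndepFun (fun n ω => (M n ω, Q n ω)) μ)
    (hident : ∀ n, IdentDistrib (fun ω => (M n ω, Q n ω)) (fun ω => (M 0 ω, Q 0 ω)) μ μ)
    (hM0 : μ {ω | M 0 ω = 0} = 0)
    (hdegen : ∀ c : ℝ, μ {ω | Q 0 ω + M 0 ω * c = c} < 1)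
    (Z : Ω → ℝ) (hZ : Measurable Z)
    (hconv : ∀ᵐ ω ∂μ, Tendsto
      (fun n => ∑ k ∈ Finset.range n, (∏ i ∈ Finset.range k, M i ω) * Q k ω)
      atTop (nhds (Z ω))) :
    ∀ x : ℝ, μ {ω | Z ω = x} = 0 := by
  intro x
  have hX : ∀ n, Measurable fun ω => (M n ω, Q n ω) := fun n => (hM n).prodMk (hQ n)
  have hfix := map_affineAction_prod_eq_of_tendsto_perpetuitySum hX hindep hident
    (measure_eq_zero_iff_ae_notMem.1 hM0) hconv
  have := Measure.isProbabilityMeasure_map (μ := μ) (hX 0).aemeasurable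
  have hatom := measure_singleton_eq_zero_of_map_affineAction hfix
    (by rwa [Measure.map_apply (hX 0) (by measurability)])
    (fun c => by rw [Measure.map_apply (hX 0) (by measurability)]; exact hdegen c) x
  rwa [Measure.map_apply hZ (measurableSet_singleton x)] at hatom

/-- If `P{M = 0} = 0`, `P{Q = 0} < 1`, `P{Q + Mc = c} < 1` for every `c`, and the
perpetuity series converges almost surely, then the distribution of `Z∞` has no atoms. -/
theorem perpetuity_no_atoms
    {Ω : Type*} [MeasurableSpace Ω] (μ : Measure Ω) [IsProbabilityMeasure μ]
    (M Q : ℕ → Ω → ℝ)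
    (hM : ∀ n, Measurable (M n)) (hQ : ∀ n, Measurable (Q n))
    (hindep : iIndepFun (fun n ω => (M n ω, Q n ω)) μ)
    (hident : ∀ n, IdentDistrib (fun ω => (M n ω, Q n ω)) (fun ω => (M 0 ω, Q 0 ω)) μ μ)
    (hM0 : μ {ω | M 0 ω = 0} = 0)
    (hQ0 : μ {ω | Q 0 ω = 0} < 1)
    (hdegen : ∀ c : ℝ, μ {ω | Q 0 ω + M 0 ω * c = c} < 1)
    (Z : Ω → ℝ) (hZ : Measurable Z)
    (hconv : ∀ᵐ ω ∂μ, Tendsto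
      (fun n => ∑ k ∈ Finset.range n, (∏ i ∈ Finset.range k, M i ω) * Q k ω)
      atTop (nhds (Z ω))) :
    ∀ x : ℝ, μ {ω | Z ω = x} = 0 :=
  perpetuity_no_atoms_general μ M Q hM hQ hindep hident hM0 hdegen Z hZ hconv
end

section
/- Assume P{M = 0} = 0, P{Q = 0} < 1, and P{Q + Mc = c} < 1 for every c ∈ ℝ. Then for any p > 0, the conditions (E|M|^p < 1 and E|Q|^p < ∞) and E[ (Σ_{n≥1} Π_{n−1}² Q_n²)^{p/2} ] < ∞ are equivalent. -/
/-!
By independence and identical distribution, the terms `T n = (Π_{n-1} Q_n)²` of the series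
have moments `E[T n ^ (p/2)] = (E|M|^p)^n E|Q|^p`. When `E|M|^p < 1` and `E|Q|^p < ∞` this
geometric decay passes to the whole series: by subadditivity of `x ↦ x^(p/2)` for `p ≤ 2`, and by
Minkowski's inequality in `L^(p/2)` for `p ≥ 2`. Conversely, if the series has a finite
`p/2`-moment, so does its first term `Q²`, and dominated convergence forces `E[T n ^ (p/2)] → 0`;
since `Q` is not a.s. zero, `E|Q|^p > 0`, so this forces `E|M|^p < 1`.
-/

open MeasureTheory ProbabilityTheory Filter Finset Real
open scoped ENNReal Topology

section SeriesMoments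

variable {α : Type*} [MeasurableSpace α] {μ : Measure α} {f : ℕ → α → ℝ≥0∞} {q : ℝ}

theorem lintegral_rpow_tsum_le_of_forall_sum_le (hf : ∀ n, AEMeasurable (f n) μ) {C : ℝ≥0∞}
    (h : ∀ N, ∫⁻ a, (∑ n ∈ range N, f n a) ^ q ∂μ ≤ C) :
    ∫⁻ a, (∑' n, f n a) ^ q ∂μ ≤ C :=
  calc ∫⁻ a, (∑' n, f n a) ^ q ∂μ
      = ∫⁻ a, liminf (fun N => (∑ n ∈ range N, f n a) ^ q) atTop ∂μ :=
        lintegral_congr fun a =>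
          ((ENNReal.tendsto_nat_tsum (f · a)).ennrpow_const q).liminf_eq.symm
    _ ≤ liminf (fun N => ∫⁻ a, (∑ n ∈ range N, f n a) ^ q ∂μ) atTop :=
        lintegral_liminf_le' fun _ => (Finset.aemeasurable_fun_sum _ fun n _ => hf n).pow_const q
    _ ≤ C := liminf_le_of_frequently_le' (Frequently.of_forall h)

theorem lintegral_rpow_tsum_le_tsum_lintegral_rpow (hf : ∀ n, AEMeasurable (f n) μ)
    (hq0 : 0 < q) (hq1 : q ≤ 1) :
    ∫⁻ a, (∑' n, f n a) ^ q ∂μ ≤ ∑' n, ∫⁻ a, f n a ^ q ∂μ := by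
  refine lintegral_rpow_tsum_le_of_forall_sum_le hf fun N => ?_
  calc ∫⁻ a, (∑ n ∈ range N, f n a) ^ q ∂μ ≤ ∫⁻ a, ∑ n ∈ range N, f n a ^ q ∂μ :=
        lintegral_mono fun a => Finset.le_sum_of_subadditive (· ^ q)
          (ENNReal.zero_rpow_of_pos hq0).le (fun x y => ENNReal.rpow_add_le_add_rpow x y hq0.le hq1)
          _ _
    _ = ∑ n ∈ range N, ∫⁻ a, f n a ^ q ∂μ :=
        lintegral_finsetSum' _ fun n _ => (hf n).pow_const q
    _ ≤ ∑' n, ∫⁻ a, f n a ^ q ∂μ := ENNReal.sum_le_tsum _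

theorem lintegral_rpow_tsum_le_rpow_tsum (hf : ∀ n, AEMeasurable (f n) μ) (hq : 1 ≤ q) :
    ∫⁻ a, (∑' n, f n a) ^ q ∂μ ≤ (∑' n, (∫⁻ a, f n a ^ q ∂μ) ^ (1 / q)) ^ q := by
  have hq0 : 0 < q := one_pos.trans_le hq
  refine lintegral_rpow_tsum_le_of_forall_sum_le hf fun N => ?_
  rw [← ENNReal.rpow_le_rpow_iff (one_div_pos.2 hq0), ← ENNReal.rpow_mul,
    mul_one_div_cancel hq0.ne', ENNReal.rpow_one]
  calc (∫⁻ a, (∑ n ∈ range N, f n a) ^ q ∂μ) ^ (1 / q)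
      = eLpNorm' (∑ n ∈ range N, f n) q μ := by
        simp only [eLpNorm'_eq_lintegral_enorm, enorm_eq_self, Finset.sum_apply]
    _ ≤ ∑ n ∈ range N, eLpNorm' (f n) q μ :=
        eLpNorm'_sum_le (fun n _ => (hf n).aestronglyMeasurable) hq
    _ ≤ ∑' n, (∫⁻ a, f n a ^ q ∂μ) ^ (1 / q) := by
        simp only [eLpNorm'_eq_lintegral_enorm, enorm_eq_self]
        exact ENNReal.sum_le_tsum _

theorem lintegral_rpow_tsum_lt_top_of_geometric (hf : ∀ n, AEMeasurable (f n) μ) (hq : 0 < q)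
    {r c : ℝ≥0∞} (hfr : ∀ n, ∫⁻ a, f n a ^ q ∂μ = r ^ n * c) (hr : r < 1) (hc : c < ∞) :
    ∫⁻ a, (∑' n, f n a) ^ q ∂μ < ∞ := by
  rcases le_total q 1 with hq1 | hq1
  · calc ∫⁻ a, (∑' n, f n a) ^ q ∂μ ≤ ∑' n, r ^ n * c :=
          (lintegral_rpow_tsum_le_tsum_lintegral_rpow hf hq hq1).trans_eq (tsum_congr hfr)
      _ = (1 - r)⁻¹ * c := by rw [ENNReal.tsum_mul_right, ENNReal.tsum_geometric]
      _ < ∞ := ENNReal.mul_lt_top (ENNReal.inv_lt_top.2 (tsub_pos_of_lt hr)) hc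
  · have hq' : 0 < 1 / q := one_div_pos.2 hq
    have hnorm : ∀ n, (∫⁻ a, f n a ^ q ∂μ) ^ (1 / q) = (r ^ (1 / q)) ^ n * c ^ (1 / q) := by
      intro n
      rw [hfr, ENNReal.mul_rpow_of_nonneg _ _ hq'.le, ← ENNReal.rpow_natCast_mul,
        ← ENNReal.rpow_mul_natCast, mul_comm (n : ℝ)]
    calc ∫⁻ a, (∑' n, f n a) ^ q ∂μ ≤ ((1 - r ^ (1 / q))⁻¹ * c ^ (1 / q)) ^ q := by
          rw [← ENNReal.tsum_geometric, ← ENNReal.tsum_mul_right, ← tsum_congr hnorm]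
          exact lintegral_rpow_tsum_le_rpow_tsum hf hq1
      _ < ∞ := ENNReal.rpow_lt_top_of_nonneg hq.le <| ENNReal.mul_ne_top
          (ENNReal.inv_ne_top.2 (tsub_pos_of_lt (ENNReal.rpow_lt_one hr hq')).ne')
          (ENNReal.rpow_ne_top_of_nonneg hq'.le hc.ne)

theorem tendsto_lintegral_rpow_of_lintegral_rpow_tsum_ne_top (hf : ∀ n, AEMeasurable (f n) μ)
    (hq : 0 < q) (hfin : ∫⁻ a, (∑' n, f n a) ^ q ∂μ ≠ ∞) :
    Tendsto (fun n => ∫⁻ a, f n a ^ q ∂μ) atTop (𝓝 0) := by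
  have hsum : ∀ᵐ a ∂μ, ∑' n, f n a ≠ ∞ := by
    filter_upwards [ae_lt_top' ((AEMeasurable.tsum hf).pow_const q) hfin] with a ha
    exact fun htop => by simp [htop, ENNReal.top_rpow_of_pos hq] at ha
  simpa using tendsto_lintegral_of_dominated_convergence' (f := fun _ => 0)
    (fun a => (∑' n, f n a) ^ q) (fun n => (hf n).pow_const q)
    (fun n => ae_of_all _ fun a => ENNReal.rpow_le_rpow (ENNReal.le_tsum n) hq.le) hfin
    (hsum.mono fun a ha => by
      simpa [ENNReal.zero_rpow_of_pos hq] using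
        (ENNReal.tendsto_atTop_zero_of_tsum_ne_top ha).ennrpow_const q)

end SeriesMoments

theorem ENNReal.lt_one_of_tendsto_pow_mul_zero {r c : ℝ≥0∞} (hc : c ≠ 0)
    (h : Tendsto (fun n : ℕ => r ^ n * c) atTop (𝓝 0)) : r < 1 := by
  by_contra! hr
  have hle : ∀ n : ℕ, c ≤ r ^ n * c := fun n => le_mul_of_one_le_left' (one_le_pow₀ hr)
  exact hc (le_bot_iff.1 (ge_of_tendsto' h hle))

theorem lintegral_prod_range_mul_eq_pow_mul {Ω β : Type*} [MeasurableSpace Ω] [MeasurableSpace β]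
    {μ : Measure Ω} {X : ℕ → Ω → β} (hX : ∀ n, Measurable (X n)) (hind : iIndepFun X μ)
    (hident : ∀ n, IdentDistrib (X n) (X 0) μ μ) {f g : β → ℝ≥0∞} (hf : Measurable f)
    (hg : Measurable g) (n : ℕ) :
    ∫⁻ ω, (∏ i ∈ range n, f (X i ω)) * g (X n ω) ∂μ
      = (∫⁻ ω, f (X 0 ω) ∂μ) ^ n * ∫⁻ ω, g (X 0 ω) ∂μ := by
  set φ : ℕ → β → ℝ≥0∞ := fun i => if i < n then f else g
  have hφ : ∀ i, Measurable (φ i) := fun i => by dsimp only [φ]; split_ifs <;> assumption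
  have hφf : ∀ i ∈ range n, φ i = f := fun i hi => if_pos (mem_range.1 hi)
  have hφg : φ n = g := if_neg (lt_irrefl n)
  have hident' : ∀ i {h : β → ℝ≥0∞}, Measurable h → ∫⁻ ω, h (X i ω) ∂μ = ∫⁻ ω, h (X 0 ω) ∂μ :=
    fun i _ hh => ((hident i).comp hh).lintegral_eq
  calc ∫⁻ ω, (∏ i ∈ range n, f (X i ω)) * g (X n ω) ∂μ
      = ∫⁻ ω, ∏ i ∈ range (n + 1), φ i (X i ω) ∂μ := by
        simp only [prod_range_succ, hφg, prod_congr rfl fun i hi => congrFun (hφf i hi) (X i _)]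
    _ = ∏ i ∈ range (n + 1), ∫⁻ ω, φ i (X i ω) ∂μ :=
        lintegral_prod_eq_prod_lintegral_of_indepFun _ _ (hind.comp φ hφ)
          fun i => (hφ i).comp (hX i)
    _ = (∫⁻ ω, f (X 0 ω) ∂μ) ^ n * ∫⁻ ω, g (X 0 ω) ∂μ := by
        rw [prod_range_succ, hφg, hident' n hg,
          prod_congr rfl fun i hi => by rw [hφf i hi, hident' i hf],
          prod_const, card_range]

theorem ENNReal.ofReal_sq_rpow_half (x : ℝ) {p : ℝ} (hp : 0 ≤ p) :
    ENNReal.ofReal (x ^ 2) ^ (p / 2) = ENNReal.ofReal (|x| ^ p) := by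
  rw [ENNReal.ofReal_rpow_of_nonneg (sq_nonneg x) (by positivity), ← sq_abs,
    ← Real.rpow_natCast, ← Real.rpow_mul (abs_nonneg x), Nat.cast_ofNat,
    mul_div_cancel₀ p two_ne_zero]

theorem ENNReal.ofReal_abs_prod_mul_rpow {ι : Type*} (s : Finset ι) (x : ι → ℝ) (y p : ℝ) :
    ENNReal.ofReal (|(∏ i ∈ s, x i) * y| ^ p)
      = (∏ i ∈ s, ENNReal.ofReal (|x i| ^ p)) * ENNReal.ofReal (|y| ^ p) := by
  rw [abs_mul, Real.mul_rpow (abs_nonneg _) (abs_nonneg _), Finset.abs_prod,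
    ← Real.finsetProd_rpow _ _ (fun i _ => abs_nonneg _) p,
    ENNReal.ofReal_mul (by positivity), ENNReal.ofReal_prod_of_nonneg (fun i _ => by positivity)]

theorem lintegral_ofReal_abs_rpow_ne_zero {Ω : Type*} [MeasurableSpace Ω] {μ : Measure Ω}
    [IsProbabilityMeasure μ] {X : Ω → ℝ} (hX : Measurable X) (p : ℝ)
    (h0 : μ {ω | X ω = 0} < 1) :
    ∫⁻ ω, ENNReal.ofReal (|X ω| ^ p) ∂μ ≠ 0 := by
  intro h
  rw [lintegral_eq_zero_iff (by fun_prop)] at h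
  have hX0 : ∀ᵐ ω ∂μ, X ω = 0 := h.mono fun ω hω => by
    by_contra hne
    simp only [Pi.zero_apply, ENNReal.ofReal_eq_zero] at hω
    exact hω.not_gt (Real.rpow_pos_of_pos (abs_pos.2 hne) p)
  rw [(prob_compl_eq_zero_iff (measurableSet_eq_fun hX measurable_const)).1 (ae_iff.1 hX0)] at h0
  exact lt_irrefl 1 h0

theorem perpetuity_moment_square_function_general
    {Ω : Type*} [MeasurableSpace Ω] (μ : Measure Ω) [IsProbabilityMeasure μ]
    (M Q : ℕ → Ω → ℝ)
    (hM : ∀ n, Measurable (M n)) (hQ : ∀ n, Measurable (Q n))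
    (hindep : iIndepFun (fun n ω => (M n ω, Q n ω)) μ)
    (hident : ∀ n, IdentDistrib (fun ω => (M n ω, Q n ω)) (fun ω => (M 0 ω, Q 0 ω)) μ μ)
    (hQ0 : μ {ω | Q 0 ω = 0} < 1)
    (p : ℝ) (hp : 0 < p) :
    (∫⁻ ω, ENNReal.ofReal (|M 0 ω| ^ p) ∂μ < 1 ∧
      ∫⁻ ω, ENNReal.ofReal (|Q 0 ω| ^ p) ∂μ < ⊤) ↔
    ∫⁻ ω, (∑' n, ENNReal.ofReal
        (((∏ i ∈ Finset.range n, M i ω) * Q n ω) ^ 2)) ^ (p / 2) ∂μ < ⊤ := by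
  set r := ∫⁻ ω, ENNReal.ofReal (|M 0 ω| ^ p) ∂μ
  set c := ∫⁻ ω, ENNReal.ofReal (|Q 0 ω| ^ p) ∂μ
  set T : ℕ → Ω → ℝ≥0∞ := fun n ω => ENNReal.ofReal (((∏ i ∈ range n, M i ω) * Q n ω) ^ 2)
  have hT : ∀ n, AEMeasurable (T n) μ := fun n => by fun_prop
  have hq : 0 < p / 2 := by positivity
  have hTmoment : ∀ n, ∫⁻ ω, T n ω ^ (p / 2) ∂μ = r ^ n * c := fun n => by
    simp only [T, ENNReal.ofReal_sq_rpow_half _ hp.le, ENNReal.ofReal_abs_prod_mul_rpow]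
    exact lintegral_prod_range_mul_eq_pow_mul (fun n => (hM n).prodMk (hQ n)) hindep hident
      (f := fun x => ENNReal.ofReal (|x.1| ^ p)) (g := fun x => ENNReal.ofReal (|x.2| ^ p))
      (by fun_prop) (by fun_prop) n
  constructor
  · rintro ⟨hr, hc⟩
    exact lintegral_rpow_tsum_lt_top_of_geometric hT hq hTmoment hr hc
  · intro hS
    have hc : c < ∞ := calc
      c = ∫⁻ ω, T 0 ω ^ (p / 2) ∂μ := by simp [hTmoment]
      _ ≤ ∫⁻ ω, (∑' n, T n ω) ^ (p / 2) ∂μ :=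
          lintegral_mono fun ω => ENNReal.rpow_le_rpow (ENNReal.le_tsum 0) hq.le
      _ < ∞ := hS
    refine ⟨ENNReal.lt_one_of_tendsto_pow_mul_zero
      (lintegral_ofReal_abs_rpow_ne_zero (hQ 0) p hQ0) ?_, hc⟩
    simpa only [hTmoment] using tendsto_lintegral_rpow_of_lintegral_rpow_tsum_ne_top hT hq hS.ne

/-- Under `P{M = 0} = 0`, `P{Q = 0} < 1` and `P{Q + Mc = c} < 1` for all `c`, for any
`p > 0`: `E|M|^p < 1` and `E|Q|^p < ∞` hold iff `E[(Σ_{n≥1} Π_{n-1}² Q_n²)^{p/2}] < ∞`. -/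
theorem perpetuity_moment_square_function
    {Ω : Type*} [MeasurableSpace Ω] (μ : Measure Ω) [IsProbabilityMeasure μ]
    (M Q : ℕ → Ω → ℝ)
    (hM : ∀ n, Measurable (M n)) (hQ : ∀ n, Measurable (Q n))
    (hindep : iIndepFun (fun n ω => (M n ω, Q n ω)) μ)
    (hident : ∀ n, IdentDistrib (fun ω => (M n ω, Q n ω)) (fun ω => (M 0 ω, Q 0 ω)) μ μ)
    (hM0 : μ {ω | M 0 ω = 0} = 0)
    (hQ0 : μ {ω | Q 0 ω = 0} < 1)
    (hdegen : ∀ c : ℝ, μ {ω | Q 0 ω + M 0 ω * c = c} < 1)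
    (p : ℝ) (hp : 0 < p) :
    (∫⁻ ω, ENNReal.ofReal (|M 0 ω| ^ p) ∂μ < 1 ∧
      ∫⁻ ω, ENNReal.ofReal (|Q 0 ω| ^ p) ∂μ < ⊤) ↔
    ∫⁻ ω, (∑' n, ENNReal.ofReal
        (((∏ i ∈ Finset.range n, M i ω) * Q n ω) ^ 2)) ^ (p / 2) ∂μ < ⊤ :=
  perpetuity_moment_square_function_general μ M Q hM hQ hindep hident hQ0 p hp
end

section
/- Let (M₁, Q₁) and (M₂, Q₂) be independent copies of the ℝ²-valued random vector (M, Q), and let p > 0. Then the conditions (E|Q|^p < ∞ and E|M|^p < 1) and (E|Q₁ + M₁ Q₂|^p < ∞ and E|M₁ M₂|^p < 1) are equivalent. -/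
/-!
With `F x = |x| ^ p`, `F` is multiplicative and `F (x + y) ≤ 2 ^ p (F x + F y)`. Independence gives
`E F(M₁ M₂) = (E F(M))²`, which is `< 1` iff `E F(M) < 1`, and
`E F(Q₁ + M₁ Q₂) ≤ 2 ^ p (E F(Q) + E F(M) E F(Q))`. Conversely, if `E F(Q₁ + M₁ Q₂) < ∞`, Fubini
over the independent `Q₂` yields a constant `c` with `E F(Q₁ + M₁ c) < ∞`, and then
`E F(Q₁) ≤ 2 ^ p (E F(Q₁ + M₁ c) + E F(M₁) F(c)) < ∞`.
-/

open MeasureTheory ProbabilityTheory Real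

section Pointwise

variable {p : ℝ}

lemma abs_add_rpow_le (hp : 0 ≤ p) (x y : ℝ) :
    |x + y| ^ p ≤ 2 ^ p * (|x| ^ p + |y| ^ p) := by
  have hmax : |x + y| ≤ 2 * max |x| |y| :=
    (abs_add_le x y).trans <|
      two_mul (max |x| |y|) ▸ add_le_add (le_max_left _ _) (le_max_right _ _)
  calc |x + y| ^ p ≤ (2 * max |x| |y|) ^ p := rpow_le_rpow (abs_nonneg _) hmax hp
    _ = 2 ^ p * max |x| |y| ^ p := mul_rpow zero_le_two (le_max_of_le_left (abs_nonneg x))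
    _ ≤ 2 ^ p * (|x| ^ p + |y| ^ p) := by
      gcongr
      rcases le_total |x| |y| with h | h
      · rw [max_eq_right h]
        exact le_add_of_nonneg_left (by positivity)
      · rw [max_eq_left h]
        exact le_add_of_nonneg_right (by positivity)

lemma ofReal_abs_add_rpow_le (hp : 0 ≤ p) (x y : ℝ) :
    ENNReal.ofReal (|x + y| ^ p) ≤
      ENNReal.ofReal (2 ^ p) * (ENNReal.ofReal (|x| ^ p) + ENNReal.ofReal (|y| ^ p)) := by
  rw [← ENNReal.ofReal_add (by positivity) (by positivity), ← ENNReal.ofReal_mul (by positivity)]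
  exact ENNReal.ofReal_le_ofReal (abs_add_rpow_le hp x y)

lemma ofReal_abs_mul_rpow (x y : ℝ) :
    ENNReal.ofReal (|x * y| ^ p) = ENNReal.ofReal (|x| ^ p) * ENNReal.ofReal (|y| ^ p) := by
  rw [abs_mul, mul_rpow (abs_nonneg _) (abs_nonneg _), ENNReal.ofReal_mul (by positivity)]

end Pointwise

section Integrals

variable {Ω : Type*} [MeasurableSpace Ω] {μ : Measure Ω} {p : ℝ}

lemma lintegral_ofReal_abs_add_rpow_le (hp : 0 ≤ p) {f : Ω → ℝ} (hf : AEMeasurable f μ)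
    (g : Ω → ℝ) :
    ∫⁻ ω, ENNReal.ofReal (|f ω + g ω| ^ p) ∂μ ≤
      ENNReal.ofReal (2 ^ p) * (∫⁻ ω, ENNReal.ofReal (|f ω| ^ p) ∂μ +
        ∫⁻ ω, ENNReal.ofReal (|g ω| ^ p) ∂μ) := by
  calc ∫⁻ ω, ENNReal.ofReal (|f ω + g ω| ^ p) ∂μ
      ≤ ∫⁻ ω, ENNReal.ofReal (2 ^ p) *
          (ENNReal.ofReal (|f ω| ^ p) + ENNReal.ofReal (|g ω| ^ p)) ∂μ :=
        lintegral_mono fun ω => ofReal_abs_add_rpow_le hp (f ω) (g ω)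
    _ = _ := by
      rw [lintegral_const_mul' _ _ ENNReal.ofReal_ne_top, lintegral_add_left' (by fun_prop)]

lemma lintegral_ofReal_abs_mul_const_rpow (f : Ω → ℝ) (c : ℝ) :
    ∫⁻ ω, ENNReal.ofReal (|f ω * c| ^ p) ∂μ =
      (∫⁻ ω, ENNReal.ofReal (|f ω| ^ p) ∂μ) * ENNReal.ofReal (|c| ^ p) := by
  simp_rw [ofReal_abs_mul_rpow]
  exact lintegral_mul_const' _ _ ENNReal.ofReal_ne_top

lemma ProbabilityTheory.IndepFun.lintegral_ofReal_abs_mul_rpow {X Y : Ω → ℝ}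
    (hXY : IndepFun X Y μ) (hX : AEMeasurable X μ) (hY : AEMeasurable Y μ) :
    ∫⁻ ω, ENNReal.ofReal (|X ω * Y ω| ^ p) ∂μ =
      (∫⁻ ω, ENNReal.ofReal (|X ω| ^ p) ∂μ) * ∫⁻ ω, ENNReal.ofReal (|Y ω| ^ p) ∂μ := by
  simp_rw [ofReal_abs_mul_rpow]
  have hF : Measurable fun x : ℝ => ENNReal.ofReal (|x| ^ p) := by fun_prop
  exact lintegral_mul_eq_lintegral_mul_lintegral_of_indepFun'' (by fun_prop) (by fun_prop)
    (hXY.comp hF hF)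

end Integrals

section Fubini

variable {Ω α β : Type*} [MeasurableSpace Ω] [MeasurableSpace α] [MeasurableSpace β]
  {μ : Measure Ω} {X : Ω → α} {Y : Ω → β}

lemma ProbabilityTheory.IndepFun.lintegral_comp_eq_lintegral_lintegral [IsFiniteMeasure μ]
    (hXY : IndepFun X Y μ) (hX : AEMeasurable X μ) (hY : AEMeasurable Y μ)
    {g : α × β → ENNReal} (hg : Measurable g) :
    ∫⁻ ω, g (X ω, Y ω) ∂μ = ∫⁻ y, ∫⁻ ω, g (X ω, y) ∂μ ∂(μ.map Y) := by
  rw [← lintegral_map' hg.aemeasurable (hX.prodMk hY), hXY.map_prod_eq_prod_map_map hX hY,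
    lintegral_prod_symm' g hg]
  exact lintegral_congr fun y => lintegral_map' (hg.comp measurable_prodMk_right).aemeasurable hX

lemma ProbabilityTheory.IndepFun.exists_lintegral_comp_lt_top [IsProbabilityMeasure μ]
    (hXY : IndepFun X Y μ) (hX : AEMeasurable X μ) (hY : AEMeasurable Y μ)
    {g : α × β → ENNReal} (hg : Measurable g) (h : ∫⁻ ω, g (X ω, Y ω) ∂μ < ⊤) :
    ∃ y, ∫⁻ ω, g (X ω, y) ∂μ < ⊤ := by
  by_contra! hinf
  have : IsProbabilityMeasure (μ.map Y) := Measure.isProbabilityMeasure_map hY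
  rw [hXY.lintegral_comp_eq_lintegral_lintegral hX hY hg,
    lintegral_congr fun y => top_le_iff.mp (hinf y)] at h
  simp at h

end Fubini

section Perpetuity

variable {Ω : Type*} [MeasurableSpace Ω] {μ : Measure Ω} {p : ℝ} {M Q Q' : Ω → ℝ}

lemma lintegral_ofReal_abs_add_mul_rpow_lt_top (hp : 0 ≤ p) (hindep : IndepFun M Q' μ)
    (hM : AEMeasurable M μ) (hQ : AEMeasurable Q μ) (hQ' : AEMeasurable Q' μ)
    (hMfin : ∫⁻ ω, ENNReal.ofReal (|M ω| ^ p) ∂μ < ⊤)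
    (hQfin : ∫⁻ ω, ENNReal.ofReal (|Q ω| ^ p) ∂μ < ⊤)
    (hQ'fin : ∫⁻ ω, ENNReal.ofReal (|Q' ω| ^ p) ∂μ < ⊤) :
    ∫⁻ ω, ENNReal.ofReal (|Q ω + M ω * Q' ω| ^ p) ∂μ < ⊤ := by
  refine (lintegral_ofReal_abs_add_rpow_le hp hQ _).trans_lt ?_
  rw [hindep.lintegral_ofReal_abs_mul_rpow hM hQ']
  finiteness

lemma lintegral_ofReal_abs_rpow_lt_top_of_add_mul [IsProbabilityMeasure μ] (hp : 0 ≤ p)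
    (hindep : IndepFun (fun ω => (M ω, Q ω)) Q' μ)
    (hMQ : AEMeasurable (fun ω => (M ω, Q ω)) μ) (hQ' : AEMeasurable Q' μ)
    (hMfin : ∫⁻ ω, ENNReal.ofReal (|M ω| ^ p) ∂μ < ⊤)
    (hfin : ∫⁻ ω, ENNReal.ofReal (|Q ω + M ω * Q' ω| ^ p) ∂μ < ⊤) :
    ∫⁻ ω, ENNReal.ofReal (|Q ω| ^ p) ∂μ < ⊤ := by
  obtain ⟨c, hc⟩ : ∃ c : ℝ, ∫⁻ ω, ENNReal.ofReal (|Q ω + M ω * c| ^ p) ∂μ < ⊤ :=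
    hindep.exists_lintegral_comp_lt_top hMQ hQ'
      (g := fun z => ENNReal.ofReal (|z.1.2 + z.1.1 * z.2| ^ p)) (by fun_prop) hfin
  have hbound := lintegral_ofReal_abs_add_rpow_le hp (f := fun ω => Q ω + M ω * c)
    (hMQ.snd.add (hMQ.fst.mul_const c)) fun ω => -(M ω * c)
  simp only [add_neg_cancel_right, abs_neg, lintegral_ofReal_abs_mul_const_rpow] at hbound
  refine hbound.trans_lt ?_
  finiteness

end Perpetuity

theorem moment_condition_two_step_equiv_general
    {Ω : Type*} [MeasurableSpace Ω] (μ : Measure Ω) [IsProbabilityMeasure μ]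
    (M Q M₁ Q₁ M₂ Q₂ : Ω → ℝ)
    (hindep : IndepFun (fun ω => (M₁ ω, Q₁ ω)) (fun ω => (M₂ ω, Q₂ ω)) μ)
    (hid₁ : IdentDistrib (fun ω => (M₁ ω, Q₁ ω)) (fun ω => (M ω, Q ω)) μ μ)
    (hid₂ : IdentDistrib (fun ω => (M₂ ω, Q₂ ω)) (fun ω => (M ω, Q ω)) μ μ)
    (p : ℝ) (hp : 0 < p) :
    (∫⁻ ω, ENNReal.ofReal (|Q ω| ^ p) ∂μ < ⊤ ∧
      ∫⁻ ω, ENNReal.ofReal (|M ω| ^ p) ∂μ < 1) ↔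
    (∫⁻ ω, ENNReal.ofReal (|Q₁ ω + M₁ ω * Q₂ ω| ^ p) ∂μ < ⊤ ∧
      ∫⁻ ω, ENNReal.ofReal (|M₁ ω * M₂ ω| ^ p) ∂μ < 1) := by
  have hF : Measurable fun x : ℝ => ENNReal.ofReal (|x| ^ p) := by fun_prop
  have hX₁ := hid₁.aemeasurable_fst
  have hX₂ := hid₂.aemeasurable_fst
  have hindM₁M₂ : IndepFun M₁ M₂ μ := hindep.comp measurable_fst measurable_fst
  have hindM₁Q₂ : IndepFun M₁ Q₂ μ := hindep.comp measurable_fst measurable_snd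
  have hM₁ := ((hid₁.comp measurable_fst).comp hF).lintegral_eq
  have hQ₁ := ((hid₁.comp measurable_snd).comp hF).lintegral_eq
  have hM₂ := ((hid₂.comp measurable_fst).comp hF).lintegral_eq
  have hQ₂ := ((hid₂.comp measurable_snd).comp hF).lintegral_eq
  simp only [Function.comp_def] at hM₁ hQ₁ hM₂ hQ₂
  rw [hindM₁M₂.lintegral_ofReal_abs_mul_rpow hX₁.fst hX₂.fst, hM₁, hM₂, mul_self_lt_one_iff]
  constructor
  · rintro ⟨hQ, hM⟩
    refine ⟨lintegral_ofReal_abs_add_mul_rpow_lt_top hp.le hindM₁Q₂ hX₁.fst hX₁.snd hX₂.snd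
      (hM₁ ▸ hM.trans ENNReal.one_lt_top) (hQ₁ ▸ hQ) (hQ₂ ▸ hQ), hM⟩
  · rintro ⟨h, hM⟩
    refine ⟨?_, hM⟩
    rw [← hQ₁]
    exact lintegral_ofReal_abs_rpow_lt_top_of_add_mul hp.le
      (hindep.comp measurable_id measurable_snd) hX₁ hX₂.snd
      (hM₁ ▸ hM.trans ENNReal.one_lt_top) h

/-- For independent copies `(M₁, Q₁)` and `(M₂, Q₂)` of `(M, Q)` and `p > 0`:
`E|Q|^p < ∞ ∧ E|M|^p < 1` holds iff `E|Q₁ + M₁ Q₂|^p < ∞ ∧ E|M₁ M₂|^p < 1`. -/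
theorem moment_condition_two_step_equiv
    {Ω : Type*} [MeasurableSpace Ω] (μ : Measure Ω) [IsProbabilityMeasure μ]
    (M Q M₁ Q₁ M₂ Q₂ : Ω → ℝ)
    (hM : Measurable M) (hQ : Measurable Q)
    (hM₁ : Measurable M₁) (hQ₁ : Measurable Q₁)
    (hM₂ : Measurable M₂) (hQ₂ : Measurable Q₂)
    (hindep : IndepFun (fun ω => (M₁ ω, Q₁ ω)) (fun ω => (M₂ ω, Q₂ ω)) μ)
    (hid₁ : IdentDistrib (fun ω => (M₁ ω, Q₁ ω)) (fun ω => (M ω, Q ω)) μ μ)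
    (hid₂ : IdentDistrib (fun ω => (M₂ ω, Q₂ ω)) (fun ω => (M ω, Q ω)) μ μ)
    (p : ℝ) (hp : 0 < p) :
    (∫⁻ ω, ENNReal.ofReal (|Q ω| ^ p) ∂μ < ⊤ ∧
      ∫⁻ ω, ENNReal.ofReal (|M ω| ^ p) ∂μ < 1) ↔
    (∫⁻ ω, ENNReal.ofReal (|Q₁ ω + M₁ ω * Q₂ ω| ^ p) ∂μ < ⊤ ∧
      ∫⁻ ω, ENNReal.ofReal (|M₁ ω * M₂ ω| ^ p) ∂μ < 1) :=
  moment_condition_two_step_equiv_general μ M Q M₁ Q₁ M₂ Q₂ hindep hid₁ hid₂ p hp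
end

section
/- Let {(X_k, Y_k) : k ≥ 1} be i.i.d. ℝ²-valued random vectors. Put S₀ = 0, S_n = X₁ + ⋯ + X_n, ξ = sup_{n≥0} S_n and ζ = sup_{n≥0} (S_n + Y_{n+1}). Then for all x, y ∈ ℝ, P{ζ > x} ≥ P{Y₁ > y} · P{ξ > x − y}. -/
/-!
Let `E n = {S n > x - y}` and cut `⋃ n, E n` into the first-passage events `disjointed E n`.
The `n`-th of them is determined by `(X i, Y i)` for `i < n`, hence is independent of
`{Y n > y}`, whose probability is `μ {Y 0 > y}` for every `n`; on the intersection of the two,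
`S n + Y n > x`. Summing over the disjoint first-passage events gives the bound.
-/

open MeasureTheory ProbabilityTheory Finset

open scoped ENNReal

theorem measurableSet_disjointed_of_le {α : Type*} {m : MeasurableSpace α} {f : ℕ → Set α}
    {n : ℕ} (hf : ∀ i ≤ n, MeasurableSet[m] (f i)) : MeasurableSet[m] (disjointed f n) := by
  rw [disjointed_eq_inter_compl]
  exact (hf n le_rfl).inter <| .iInter fun i => .iInter fun hi => (hf i hi.le).compl

theorem ProbabilityTheory.measure_iUnion_disjointed_inter_eq_mul {Ω : Type*} [MeasurableSpace Ω]
    {μ : Measure Ω} {E F : ℕ → Set Ω} {p : ℝ≥0∞} (hE : ∀ n, MeasurableSet (E n))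
    (hF : ∀ n, MeasurableSet (F n)) (hEF : ∀ n, IndepSet (disjointed E n) (F n) μ)
    (hp : ∀ n, μ (F n) = p) :
    μ (⋃ n, disjointed E n ∩ F n) = p * μ (⋃ n, E n) := by
  have hD : Pairwise (Function.onFun Disjoint fun n => disjointed E n ∩ F n) := fun i j hij =>
    (disjoint_disjointed E hij).mono Set.inter_subset_left Set.inter_subset_left
  calc μ (⋃ n, disjointed E n ∩ F n)
      = ∑' n, μ (disjointed E n) * p := by
        rw [measure_iUnion hD fun n => (MeasurableSet.disjointed hE n).inter (hF n)]
        simp only [(hEF _).measure_inter_eq_mul, hp]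
    _ = p * μ (⋃ n, E n) := by
        rw [ENNReal.tsum_mul_right, mul_comm, ← measure_iUnion (disjoint_disjointed E)
          (MeasurableSet.disjointed hE), iUnion_disjointed]

theorem ProbabilityTheory.iIndepFun.indep_iSup_lt_comap {Ω ι β : Type*} [MeasurableSpace Ω]
    [mβ : MeasurableSpace β] [Preorder ι] {μ : Measure Ω} {Z : ι → Ω → β}
    (hZ : ∀ i, Measurable (Z i)) (h : iIndepFun Z μ) (n : ι) :
    Indep (⨆ i < n, mβ.comap (Z i)) (mβ.comap (Z n)) μ := by
  have := indep_iSup_of_disjoint (fun i => (hZ i).comap_le) ((iIndepFun_iff_iIndep _ _ _).1 h)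
    (Set.disjoint_singleton_right.2 (lt_irrefl n) : Disjoint (Set.Iio n) {n})
  simpa only [Set.mem_Iio, Set.mem_singleton_iff, iSup_iSup_eq_left] using this

theorem measurable_iSup_lt_comap_sum_range {Ω β : Type*} [mβ : MeasurableSpace β]
    {Z : ℕ → Ω → β} {g : β → ℝ} (hg : Measurable g) {m n : ℕ} (hmn : m ≤ n) :
    Measurable[⨆ i < n, mβ.comap (Z i)] fun ω => ∑ i ∈ range m, g (Z i ω) := by
  refine Finset.measurable_sum _ fun i hi => ?_
  have hin : i < n := (Finset.mem_range.1 hi).trans_le hmn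
  exact hg.comp <|
    (comap_measurable (Z i)).mono (le_iSup₂ (f := fun j _ => mβ.comap (Z j)) i hin) le_rfl

theorem sup_random_walk_tail_inequality_general
    {Ω : Type*} [MeasurableSpace Ω] (μ : Measure Ω)
    (X Y : ℕ → Ω → ℝ)
    (hX : ∀ n, Measurable (X n)) (hY : ∀ n, Measurable (Y n))
    (hindep : iIndepFun (fun n ω => (X n ω, Y n ω)) μ)
    (hident : ∀ n, IdentDistrib (fun ω => (X n ω, Y n ω)) (fun ω => (X 0 ω, Y 0 ω)) μ μ)
    (x y : ℝ) :
    μ {ω | ∃ n, (∑ i ∈ Finset.range n, X i ω) + Y n ω > x} ≥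
      μ {ω | Y 0 ω > y} * μ {ω | ∃ n, (∑ i ∈ Finset.range n, X i ω) > x - y} := by
  set Z : ℕ → Ω → ℝ × ℝ := fun n ω => (X n ω, Y n ω)
  set E : ℕ → Set Ω := fun n => {ω | ∑ i ∈ range n, X i ω > x - y}
  set F : ℕ → Set Ω := fun n => {ω | Y n ω > y}
  have hE_past : ∀ n, MeasurableSet[⨆ i < n, MeasurableSpace.comap (Z i) inferInstance]
      (disjointed E n) := fun n => measurableSet_disjointed_of_le fun m hm =>
    measurableSet_lt measurable_const (measurable_iSup_lt_comap_sum_range measurable_fst hm)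
  have hF_present : ∀ n, MeasurableSet[MeasurableSpace.comap (Z n) inferInstance] (F n) :=
    fun n => measurableSet_lt measurable_const (measurable_snd.comp (comap_measurable (Z n)))
  have hEF : ∀ n, IndepSet (disjointed E n) (F n) μ := fun n =>
    (hindep.indep_iSup_lt_comap (fun i => (hX i).prodMk (hY i)) n).indepSet_of_measurableSet
      (hE_past n) (hF_present n)
  have hF_eq : ∀ n, μ (F n) = μ (F 0) := fun n =>
    ((hident n).comp measurable_snd).measure_mem_eq measurableSet_Ioi
  have hsub :
      (⋃ n, disjointed E n ∩ F n) ⊆ {ω | ∃ n, (∑ i ∈ range n, X i ω) + Y n ω > x} := by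
    simp only [Set.iUnion_subset_iff]
    intro n ω ⟨hωE, hωF⟩
    have hS : ∑ i ∈ range n, X i ω > x - y := disjointed_subset E n hωE
    exact ⟨n, by linarith [show Y n ω > y from hωF]⟩
  calc μ {ω | ∃ n, (∑ i ∈ range n, X i ω) + Y n ω > x}
      ≥ μ (⋃ n, disjointed E n ∩ F n) := measure_mono hsub
    _ = μ (F 0) * μ (⋃ n, E n) := measure_iUnion_disjointed_inter_eq_mul
        (fun n => measurableSet_lt measurable_const (Finset.measurable_sum _ fun i _ => hX i))
        (fun n => measurableSet_lt measurable_const (hY n)) hEF hF_eq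
    _ = μ {ω | Y 0 ω > y} * μ {ω | ∃ n, (∑ i ∈ range n, X i ω) > x - y} := by
        rw [Set.ofPred_exists]

/-- **Tail inequality.** Let `(X_k, Y_k)` be i.i.d., `S_0 = 0`, `S_n = X_1 + ⋯ + X_n`,
`ξ = sup_{n≥0} S_n` and `ζ = sup_{n≥0} (S_n + Y_{n+1})`. Then for all `x, y ∈ ℝ`:
`P{ζ > x} ≥ P{Y₁ > y} · P{ξ > x - y}` (with `sup > t` expressed as `∃ n`, term `> t`). -/
theorem sup_random_walk_tail_inequality
    {Ω : Type*} [MeasurableSpace Ω] (μ : Measure Ω) [IsProbabilityMeasure μ]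
    (X Y : ℕ → Ω → ℝ)
    (hX : ∀ n, Measurable (X n)) (hY : ∀ n, Measurable (Y n))
    (hindep : iIndepFun (fun n ω => (X n ω, Y n ω)) μ)
    (hident : ∀ n, IdentDistrib (fun ω => (X n ω, Y n ω)) (fun ω => (X 0 ω, Y 0 ω)) μ μ)
    (x y : ℝ) :
    μ {ω | ∃ n, (∑ i ∈ Finset.range n, X i ω) + Y n ω > x} ≥
      μ {ω | Y 0 ω > y} * μ {ω | ∃ n, (∑ i ∈ Finset.range n, X i ω) > x - y} :=
  sup_random_walk_tail_inequality_general μ X Y hX hY hindep hident x y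
end

section
/- Let {(X_k, Y_k) : k ≥ 1} be i.i.d. ℝ²-valued random vectors. Put S₀ = 0, S_n = X₁ + ⋯ + X_n, ξ = sup_{n≥0} S_n and ζ = sup_{n≥0} (S_n + Y_{n+1}). Then there exists a constant c ∈ (1, ∞), not depending on Φ, such that for every nondecreasing differentiable function Φ : [0, ∞) → [0, ∞), E Φ(ξ) ≤ Φ(0) + c · E Φ(c + ζ⁺), where ζ⁺ = max(ζ, 0). -/
/-!
Choose `a ≥ 0` with `P(Y₀ ≥ -a) > 1/2` and put `c = a + 2`. Splitting `{∃ k, S_k ≥ s}` according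
to the first passage time `τ` of the level `s`, and using that `Y_k` is independent of `{τ = k}`,
gives `P(∃ k, S_k ≥ s) ≤ 2 P(∃ k, S_k + Y_k ≥ s - a)` for every `s`. As `Φ` is monotone, for
`t > Φ(0)` the event `{Φ(ξ) > t}` lies between `{ξ > s}` and `{ξ ≥ s}` for a threshold `s`, and
`S_k + Y_k ≥ s - a` forces `Φ(c + ζ⁺) > t`; integrating these tail bounds over `t`
(layer cake) gives the moment inequality.
-/

open MeasureTheory ProbabilityTheory Filter Finset
open scoped ENNReal

section

variable {Ω : Type*} {mΩ : MeasurableSpace Ω} {μ : Measure Ω}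

theorem ProbabilityTheory.iIndep.mul_measure_iUnion_le_measure_iUnion_inter
    {m : ℕ → MeasurableSpace Ω} (hle : ∀ i, m i ≤ mΩ) (hindep : iIndep m μ) {A B : ℕ → Set Ω}
    (hA : ∀ k, MeasurableSet[⨆ i < k, m i] (A k)) (hB : ∀ k, MeasurableSet[m k] (B k))
    {p : ℝ≥0∞} (hp : ∀ k, p ≤ μ (B k)) :
    p * μ (⋃ k, A k) ≤ μ (⋃ k, A k ∩ B k) := by
  have hD : ∀ k, MeasurableSet[⨆ i < k, m i] (disjointed A k) := by
    intro k
    rw [disjointed_eq_inter_compl]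
    refine (hA k).inter (.biInter (Set.to_countable _) fun j (hj : j < k) => ?_)
    have hpast_mono : (⨆ i < j, m i) ≤ ⨆ i < k, m i := biSup_mono fun i hi => hi.trans hj
    exact (hpast_mono _ (hA j)).compl
  have hDmeas : ∀ k, MeasurableSet (disjointed A k) :=
    fun k => iSup₂_le (fun i _ => hle i) _ (hD k)
  have hindepD : ∀ k, μ (disjointed A k ∩ B k) = μ (disjointed A k) * μ (B k) := by
    intro k
    have hpast := indep_iSup_of_disjoint hle hindep (S := Set.Iio k) (T := {k}) (by simp)
    simp only [Set.mem_Iio, Set.mem_singleton_iff, iSup_iSup_eq_left] at hpast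
    exact (Indep_iff _ _ _).1 hpast _ _ (hD k) (hB k)
  calc p * μ (⋃ k, A k) = ∑' k, p * μ (disjointed A k) := by
        rw [← iUnion_disjointed, measure_iUnion (disjoint_disjointed A) hDmeas,
          ENNReal.tsum_mul_left]
    _ ≤ ∑' k, μ (disjointed A k ∩ B k) := by
        gcongr with k
        rw [hindepD, mul_comm]
        gcongr
        exact hp k
    _ = μ (⋃ k, disjointed A k ∩ B k) :=
        (measure_iUnion ((disjoint_disjointed A).mono fun _ _ h =>
          h.mono Set.inter_subset_left Set.inter_subset_left)
          fun k => (hDmeas k).inter (hle k _ (hB k))).symm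
    _ ≤ μ (⋃ k, A k ∩ B k) :=
        measure_mono (Set.iUnion_mono fun k =>
          Set.inter_subset_inter_left _ (disjointed_subset A k))

theorem ProbabilityTheory.iIndepFun.mul_measure_exists_le_sum_le {β : Type*}
    [MeasurableSpace β] {X : ℕ → Ω → ℝ} {Y : ℕ → Ω → β}
    (hXY : ∀ n, Measurable fun ω => (X n ω, Y n ω))
    (hindep : iIndepFun (fun n ω => (X n ω, Y n ω)) μ) {B : Set β} (hB : MeasurableSet B)
    {p : ℝ≥0∞} (hp : ∀ n, p ≤ μ (Y n ⁻¹' B)) (s : ℝ) :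
    p * μ {ω | ∃ k, s ≤ ∑ i ∈ range k, X i ω} ≤
      μ {ω | ∃ k, s ≤ ∑ i ∈ range k, X i ω ∧ Y k ω ∈ B} := by
  set m : ℕ → MeasurableSpace Ω :=
    fun n => MeasurableSpace.comap (fun ω => (X n ω, Y n ω)) inferInstance
  have hsum : ∀ k, Measurable[⨆ i < k, m i] fun ω => ∑ i ∈ range k, X i ω := by
    intro k
    refine Finset.measurable_sum _ fun i hi => ?_
    have hi_le : m i ≤ ⨆ i < k, m i := le_iSup₂ (f := fun i (_ : i < k) => m i) i (mem_range.1 hi)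
    exact (measurable_fst.comp (comap_measurable _)).mono hi_le le_rfl
  simp_rw [Set.ofPred_exists, Set.ofPred_and]
  exact hindep.iIndep.mul_measure_iUnion_le_measure_iUnion_inter
    (fun n => (hXY n).comap_le) (A := fun k => {ω | s ≤ ∑ i ∈ range k, X i ω})
    (B := fun k => Y k ⁻¹' B) (fun k => measurableSet_le measurable_const (hsum k))
    (fun k => ⟨Prod.snd ⁻¹' B, measurable_snd hB, rfl⟩) hp

theorem Real.volume_setOf_ofReal_lt_inter_Ioi (x : ℝ≥0∞) :
    volume ({t : ℝ | ENNReal.ofReal t < x} ∩ Set.Ioi 0) = x := by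
  rcases eq_or_ne x ∞ with rfl | hx
  · simp
  · have : {t : ℝ | ENNReal.ofReal t < x} ∩ Set.Ioi 0 = Set.Ioo 0 x.toReal := by
      ext t
      simp +contextual [ENNReal.ofReal_lt_iff_lt_toReal, le_of_lt, hx, and_comm]
    rw [this, Real.volume_Ioo, sub_zero, ENNReal.ofReal_toReal hx]

theorem MeasureTheory.lintegral_eq_lintegral_meas_ofReal_lt [SFinite μ] {F : Ω → ℝ≥0∞}
    (hF : Measurable F) :
    ∫⁻ ω, F ω ∂μ = ∫⁻ t in Set.Ioi 0, μ {ω | ENNReal.ofReal t < F ω} := by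
  have hS : MeasurableSet {q : ℝ × Ω | ENNReal.ofReal q.1 < F q.2} :=
    measurableSet_lt (ENNReal.measurable_ofReal.comp measurable_fst) (hF.comp measurable_snd)
  calc ∫⁻ ω, F ω ∂μ
      = ∫⁻ ω, volume.restrict (Set.Ioi 0)
          ((·, ω) ⁻¹' {q : ℝ × Ω | ENNReal.ofReal q.1 < F q.2}) ∂μ := by
        refine lintegral_congr fun ω => ?_
        rw [Measure.restrict_apply' measurableSet_Ioi]
        exact (Real.volume_setOf_ofReal_lt_inter_Ioi (F ω)).symm
    _ = _ := (Measure.prod_apply_symm hS).symm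
    _ = _ := Measure.prod_apply hS

theorem MeasureTheory.lintegral_le_ofReal_add_mul_of_meas_lt_le [IsZeroOrProbabilityMeasure μ]
    {F G : Ω → ℝ≥0∞} (hF : Measurable F) (hG : Measurable G) {b : ℝ} (hb : 0 ≤ b) {C : ℝ≥0∞}
    (htail : ∀ t, b < t →
      μ {ω | ENNReal.ofReal t < F ω} ≤ C * μ {ω | ENNReal.ofReal t < G ω}) :
    ∫⁻ ω, F ω ∂μ ≤ ENNReal.ofReal b + C * ∫⁻ ω, G ω ∂μ := by
  have hGtail : Measurable fun t : ℝ => μ {ω | ENNReal.ofReal t < G ω} :=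
    Antitone.measurable fun s t hst =>
      measure_mono fun ω hω => (ENNReal.ofReal_le_ofReal hst).trans_lt hω
  rw [lintegral_eq_lintegral_meas_ofReal_lt hF, lintegral_eq_lintegral_meas_ofReal_lt hG,
    ← Set.Ioc_union_Ioi_eq_Ioi hb, lintegral_union measurableSet_Ioi (Set.Ioc_disjoint_Ioi le_rfl)]
  gcongr
  · calc _ ≤ ∫⁻ _ in Set.Ioc 0 b, 1 := setLIntegral_mono measurable_const fun _ _ => prob_le_one
      _ = ENNReal.ofReal b := by simp
  · calc _ ≤ ∫⁻ t in Set.Ioi b, C * μ {ω | ENNReal.ofReal t < G ω} :=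
          setLIntegral_mono (hGtail.const_mul C) htail
      _ = C * ∫⁻ t in Set.Ioi b, μ {ω | ENNReal.ofReal t < G ω} := lintegral_const_mul C hGtail
      _ ≤ _ := by gcongr; exact Set.subset_union_right

theorem Monotone.exists_threshold {α β : Type*} [ConditionallyCompleteLinearOrder α] [Preorder β]
    {Ψ : α → β} (hΨ : Monotone Ψ) {t : β} (hlt : ∃ x, t < Ψ x) (hle : ∃ x, Ψ x ≤ t) :
    ∃ s, (∀ x, t < Ψ x → s ≤ x) ∧ ∀ x, s < x → t < Ψ x := by
  obtain ⟨x₀, hx₀⟩ := hle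
  have hbdd : BddBelow {x | t < Ψ x} :=
    ⟨x₀, fun x hx => le_of_not_gt fun hxx₀ => (hx.trans_le ((hΨ hxx₀.le).trans hx₀)).false⟩
  refine ⟨sInf {x | t < Ψ x}, fun x hx => csInf_le hbdd hx, fun x hx => ?_⟩
  obtain ⟨y, hy, hyx⟩ := exists_lt_of_csInf_lt hlt hx
  exact (show t < Ψ y from hy).trans_le (hΨ hyx.le)

theorem MonotoneOn.monotone_comp_add_max_zero {Φ : ℝ → ℝ} (hΦ : MonotoneOn Φ (Set.Ici 0))
    {c : ℝ} (hc : 0 ≤ c) : Monotone fun x => Φ (c + max x 0) := fun _ _ hxy =>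
  hΦ (Set.mem_Ici.2 (by positivity)) (Set.mem_Ici.2 (by positivity)) (by gcongr)

theorem measure_ofReal_lt_iSup_le_mul {U V : ℕ → Ω → ℝ} {a c : ℝ} {C : ℝ≥0∞}
    (hUV : ∀ s, μ {ω | ∃ k, s ≤ U k ω} ≤ C * μ {ω | ∃ k, s - a ≤ V k ω})
    (hc : 0 ≤ c) (hac : a < c) {Φ : ℝ → ℝ} (hΦ : MonotoneOn Φ (Set.Ici 0)) {t : ℝ}
    (ht₀ : 0 ≤ t) (ht : Φ 0 < t) :
    μ {ω | ENNReal.ofReal t < ⨆ n, ENNReal.ofReal (Φ (max (U n ω) 0))} ≤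
      C * μ {ω | ENNReal.ofReal t < ⨆ n, ENNReal.ofReal (Φ (c + max (V n ω) 0))} := by
  have hlt_iSup {f : ℕ → ℝ} : ENNReal.ofReal t < ⨆ n, ENNReal.ofReal (f n) ↔ ∃ n, t < f n := by
    simp only [lt_iSup_iff, ENNReal.ofReal_lt_ofReal_iff_of_nonneg ht₀]
  have hΨ : Monotone fun x => Φ (max x 0) := by
    simpa only [zero_add] using hΦ.monotone_comp_add_max_zero le_rfl
  by_cases hexceed : ∃ x, t < Φ (max x 0)
  · obtain ⟨s, hs_le, hs_lt⟩ := hΨ.exists_threshold hexceed ⟨0, by simpa using ht.le⟩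
    calc _ ≤ μ {ω | ∃ k, s ≤ U k ω} :=
          measure_mono fun ω hω => (hlt_iSup.1 hω).imp fun k hk => hs_le _ hk
      _ ≤ C * μ {ω | ∃ k, s - a ≤ V k ω} := hUV s
      _ ≤ _ := by
          gcongr with ω
          rintro ⟨k, hk⟩
          refine hlt_iSup.2 ⟨k, ?_⟩
          have hpos : 0 ≤ c + max (V k ω) 0 := by positivity
          simpa only [max_eq_left hpos] using
            hs_lt (c + max (V k ω) 0) (by linarith [le_max_left (V k ω) 0])
  · have hempty : {ω | ENNReal.ofReal t < ⨆ n, ENNReal.ofReal (Φ (max (U n ω) 0))} = ∅ :=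
      Set.eq_empty_of_forall_notMem fun ω hω =>
        let ⟨k, hk⟩ := hlt_iSup.1 hω
        hexceed ⟨U k ω, hk⟩
    simp [hempty]

theorem lintegral_iSup_ofReal_le_mul [IsZeroOrProbabilityMeasure μ] {U V : ℕ → Ω → ℝ}
    (hU : ∀ n, Measurable (U n)) (hV : ∀ n, Measurable (V n)) {a c : ℝ} {C : ℝ≥0∞}
    (hUV : ∀ s, μ {ω | ∃ k, s ≤ U k ω} ≤ C * μ {ω | ∃ k, s - a ≤ V k ω})
    (hc : 0 ≤ c) (hac : a < c) {Φ : ℝ → ℝ} (hΦ : MonotoneOn Φ (Set.Ici 0)) (hΦ0 : 0 ≤ Φ 0) :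
    ∫⁻ ω, ⨆ n, ENNReal.ofReal (Φ (max (U n ω) 0)) ∂μ ≤
      ENNReal.ofReal (Φ 0) + C * ∫⁻ ω, ⨆ n, ENNReal.ofReal (Φ (c + max (V n ω) 0)) ∂μ := by
  have hΨ : Monotone fun x => Φ (max x 0) := by
    simpa only [zero_add] using hΦ.monotone_comp_add_max_zero le_rfl
  exact lintegral_le_ofReal_add_mul_of_meas_lt_le
    (.iSup fun n => ENNReal.measurable_ofReal.comp (hΨ.measurable.comp (hU n)))
    (.iSup fun n => ENNReal.measurable_ofReal.comp
      ((hΦ.monotone_comp_add_max_zero hc).measurable.comp (hV n)))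
    hΦ0 fun t ht => measure_ofReal_lt_iSup_le_mul hUV hc hac hΦ (hΦ0.trans ht.le) ht

theorem exists_nonneg_lt_measure_preimage_Ici_neg (V : Ω → ℝ) {p : ℝ≥0∞}
    (hp : p < μ Set.univ) : ∃ a : ℝ, 0 ≤ a ∧ p < μ (V ⁻¹' Set.Ici (-a)) := by
  have hmono : Monotone fun a : ℝ => V ⁻¹' Set.Ici (-a) := fun _ _ hab =>
    Set.preimage_mono (Set.Ici_subset_Ici.2 (neg_le_neg hab))
  have hunion : ⋃ a : ℝ, V ⁻¹' Set.Ici (-a) = Set.univ :=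
    Set.eq_univ_of_forall fun ω => Set.mem_iUnion.2 ⟨-V ω, by simp⟩
  have hlim := tendsto_measure_iUnion_atTop (μ := μ) hmono
  rw [hunion] at hlim
  exact ((hlim.eventually (lt_mem_nhds hp)).and (eventually_ge_atTop 0)).exists.imp
    fun _ h => h.symm

end

/-- **Moment inequality.** Let `(X_k, Y_k)` be i.i.d., `S_0 = 0`, `S_n = X_1 + ⋯ + X_n`,
`ξ = sup_{n≥0} S_n` (note `ξ ≥ 0`) and `ζ = sup_{n≥0} (S_n + Y_{n+1})`. Then there is a
constant `c ∈ (1, ∞)`, not depending on `Φ`, such that for every nondecreasing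
differentiable `Φ : [0,∞) → [0,∞)`: `E Φ(ξ) ≤ Φ(0) + c · E Φ(c + ζ⁺)`.
(Here `Φ(ξ) = sup_n Φ(S_n ∨ 0)` and `Φ(c + ζ⁺) = sup_n Φ(c + ((S_n + Y_{n+1}) ∨ 0))`,
using monotonicity and continuity of `Φ`; expectations are lower integrals in `ℝ≥0∞`.) -/
theorem sup_random_walk_moment_inequality
    {Ω : Type*} [MeasurableSpace Ω] (μ : Measure Ω) [IsProbabilityMeasure μ]
    (X Y : ℕ → Ω → ℝ)
    (hX : ∀ n, Measurable (X n)) (hY : ∀ n, Measurable (Y n))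
    (hindep : iIndepFun (fun n ω => (X n ω, Y n ω)) μ)
    (hident : ∀ n, IdentDistrib (fun ω => (X n ω, Y n ω)) (fun ω => (X 0 ω, Y 0 ω)) μ μ) :
    ∃ c : ℝ, 1 < c ∧
      ∀ Φ : ℝ → ℝ, MonotoneOn Φ (Set.Ici 0) → (∀ x ∈ Set.Ici (0 : ℝ), 0 ≤ Φ x) →
        DifferentiableOn ℝ Φ (Set.Ici 0) →
        ∫⁻ ω, ⨆ n, ENNReal.ofReal (Φ (max (∑ i ∈ Finset.range n, X i ω) 0)) ∂μ ≤
          ENNReal.ofReal (Φ 0) + ENNReal.ofReal c *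
            ∫⁻ ω, ⨆ n, ENNReal.ofReal
              (Φ (c + max ((∑ i ∈ Finset.range n, X i ω) + Y n ω) 0)) ∂μ := by
  obtain ⟨a, ha, hhalf⟩ := exists_nonneg_lt_measure_preimage_Ici_neg (μ := μ) (Y 0)
    (p := 2⁻¹) (by simp)
  have hYn : ∀ n, 2⁻¹ ≤ μ (Y n ⁻¹' Set.Ici (-a)) := fun n =>
    hhalf.le.trans_eq (((hident n).comp measurable_snd).measure_mem_eq measurableSet_Ici).symm
  have hwalk : ∀ s, μ {ω | ∃ k, s ≤ ∑ i ∈ range k, X i ω} ≤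
      2 * μ {ω | ∃ k, s - a ≤ (∑ i ∈ range k, X i ω) + Y k ω} := by
    intro s
    calc _ = 2 * (2⁻¹ * μ {ω | ∃ k, s ≤ ∑ i ∈ range k, X i ω}) := by
          rw [← mul_assoc, ENNReal.mul_inv_cancel two_ne_zero ENNReal.ofNat_ne_top, one_mul]
      _ ≤ 2 * μ {ω | ∃ k, s ≤ ∑ i ∈ range k, X i ω ∧ Y k ω ∈ Set.Ici (-a)} := by
          gcongr
          exact hindep.mul_measure_exists_le_sum_le (fun n => (hX n).prodMk (hY n))
            measurableSet_Ici hYn s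
      _ ≤ _ := by
          gcongr 2 * ?_
          exact measure_mono fun ω ⟨k, _, hYk⟩ => ⟨k, by linarith [Set.mem_Ici.1 hYk]⟩
  have hS : ∀ n, Measurable fun ω => ∑ i ∈ range n, X i ω :=
    fun n => measurable_sum _ fun i _ => hX i
  refine ⟨a + 2, by linarith, fun Φ hΦ hΦ_nonneg _ => ?_⟩
  calc _ ≤ _ := lintegral_iSup_ofReal_le_mul (c := a + 2)
        (V := fun n ω => (∑ i ∈ range n, X i ω) + Y n ω)
        hS (fun n => (hS n).add (hY n)) hwalk (by linarith) (by linarith) hΦ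
        (hΦ_nonneg 0 Set.self_mem_Ici)
    _ ≤ _ := by
        gcongr
        rw [← ENNReal.ofReal_ofNat 2]
        exact ENNReal.ofReal_le_ofReal (by linarith)
end

section
/- Suppose there exists β ∈ (0, 1) with P{|M| ≤ β} = 1, and let s > 0 satisfy E e^{s|Q|} < ∞. Then E exp( s · Σ_{k≥1} |Π_{k−1} Q_k| ) < ∞; in particular the perpetuity series converges almost surely and E e^{s|Z∞|} < ∞. -/
open MeasureTheory ProbabilityTheory Filter Finset Real
open scoped ENNReal

/-!
Since `|M| ≤ β` a.s., `|Π_k| ≤ β^k`, so `exp(s Σ_k |Π_k Q_{k+1}|) ≤ Π_k Y_k^(β^k)` with the i.i.d.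
factors `Y_k = e^{s|Q_{k+1}|}`. By independence and Jensen's inequality for the concave map
`y ↦ y^(β^k)`, the expectation of the product is at most `Π_k (E Y)^(β^k) ≤ (E Y)^(1/(1-β))`.
Finiteness of the dominating variable then gives absolute convergence of the series a.s., and
`e^{s|Z∞|}` is dominated by it.
-/

namespace ENNReal

theorem prod_rpow_eq_rpow_sum {ι : Type*} (s : Finset ι) (x : ℝ≥0∞) {t : ι → ℝ}
    (ht : ∀ i ∈ s, 0 ≤ t i) : ∏ i ∈ s, x ^ t i = x ^ ∑ i ∈ s, t i := by
  classical
  induction s using Finset.induction_on with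
  | empty => simp
  | insert j s hj ih =>
    have ht' : ∀ i ∈ s, 0 ≤ t i := fun i hi => ht i (mem_insert_of_mem hi)
    rw [prod_insert hj, sum_insert hj, ih ht',
      rpow_add_of_nonneg _ _ (ht j (mem_insert_self j s)) (sum_nonneg ht')]

theorem prod_rpow_pow_le_rpow_inv_one_sub {x : ℝ≥0∞} (hx : 1 ≤ x) {β : ℝ} (hβ0 : 0 ≤ β)
    (hβ1 : β < 1) (n : ℕ) : ∏ k ∈ range n, x ^ (β ^ k) ≤ x ^ (1 - β)⁻¹ := by
  rw [prod_rpow_eq_rpow_sum _ _ fun k _ => pow_nonneg hβ0 k, ← tsum_geometric_of_lt_one hβ0 hβ1]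
  exact rpow_le_rpow_of_exponent_le hx <|
    (summable_geometric_of_lt_one hβ0 hβ1).sum_le_tsum _ fun k _ => pow_nonneg hβ0 k

theorem ofReal_exp_mul_sum_pow_mul (s β : ℝ) (hβ : 0 ≤ β) (x : ℕ → ℝ) (n : ℕ) :
    ENNReal.ofReal (exp (s * ∑ k ∈ range n, β ^ k * x k))
      = ∏ k ∈ range n, ENNReal.ofReal (exp (s * x k)) ^ (β ^ k) := by
  rw [mul_sum, exp_sum, ofReal_prod_of_nonneg fun k _ => (exp_pos _).le]
  refine prod_congr rfl fun k _ => ?_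
  rw [ofReal_rpow_of_nonneg (exp_pos _).le (pow_nonneg hβ k), ← exp_mul]
  ring_nf

end ENNReal

theorem MeasureTheory.lintegral_rpow_le_rpow_lintegral {Ω : Type*} [MeasurableSpace Ω]
    {μ : Measure Ω} [IsProbabilityMeasure μ] {f : Ω → ℝ≥0∞} (hf : AEMeasurable f μ) {t : ℝ}
    (ht0 : 0 < t) (ht1 : t ≤ 1) : ∫⁻ ω, f ω ^ t ∂μ ≤ (∫⁻ ω, f ω ∂μ) ^ t := by
  have h := eLpNorm'_le_eLpNorm'_of_exponent_le ht0 ht1 μ hf.aestronglyMeasurable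
  simp only [eLpNorm'_eq_lintegral_enorm, enorm_eq_self, ENNReal.rpow_one, div_one] at h
  have := ENNReal.rpow_le_rpow h ht0.le
  rwa [← ENNReal.rpow_mul, one_div, inv_mul_cancel₀ ht0.ne', ENNReal.rpow_one] at this

theorem sum_abs_prod_mul_le_sum_pow_mul_abs {m q : ℕ → ℝ} {β : ℝ} (hm : ∀ i, |m i| ≤ β)
    (n : ℕ) :
    ∑ k ∈ range n, |(∏ i ∈ range k, m i) * q k| ≤ ∑ k ∈ range n, β ^ k * |q k| := by
  refine sum_le_sum fun k _ => ?_
  rw [abs_mul, abs_prod]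
  gcongr
  simpa using prod_le_prod (s := range k) (fun i _ => abs_nonneg (m i)) fun i _ => hm i

theorem ofReal_exp_abs_tsum_le_iSup {a : ℕ → ℝ} {s : ℝ} (hs : 0 ≤ s) :
    ENNReal.ofReal (exp (s * |∑' k, a k|))
      ≤ ⨆ n, ENNReal.ofReal (exp (s * ∑ k ∈ range n, |a k|)) := by
  by_cases ha : Summable a
  · have hlim : Tendsto (fun n => ENNReal.ofReal (exp (s * ∑ k ∈ range n, |a k|))) atTop
        (nhds (ENNReal.ofReal (exp (s * ∑' k, |a k|)))) :=
      ENNReal.tendsto_ofReal <| (continuous_exp.tendsto _).comp <|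
        (ha.abs.hasSum.tendsto_sum_nat).const_mul s
    refine le_trans ?_ (le_of_tendsto' hlim fun n => le_iSup (fun n => ENNReal.ofReal
      (exp (s * ∑ k ∈ range n, |a k|))) n)
    gcongr
    simpa only [Real.norm_eq_abs] using norm_tsum_le_tsum_norm ha.norm
  · refine le_trans ?_ (le_iSup _ 0)
    simp [tsum_eq_zero_of_not_summable ha]

theorem summable_of_iSup_ofReal_exp_ne_top {a : ℕ → ℝ} {s : ℝ} (hs : 0 < s)
    (h : ⨆ n, ENNReal.ofReal (exp (s * ∑ k ∈ range n, |a k|)) ≠ ⊤) : Summable a := by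
  set C := ⨆ n, ENNReal.ofReal (exp (s * ∑ k ∈ range n, |a k|))
  refine Summable.of_abs <| summable_of_sum_range_le (c := log C.toReal / s)
    (fun k => abs_nonneg _) fun n => ?_
  have hle : exp (s * ∑ k ∈ range n, |a k|) ≤ C.toReal :=
    (ENNReal.ofReal_le_iff_le_toReal h).1 (le_iSup (fun n => ENNReal.ofReal
      (exp (s * ∑ k ∈ range n, |a k|))) n)
  rw [le_div_iff₀ hs, mul_comm, ← exp_le_exp, exp_log ((exp_pos _).trans_le hle)]
  exact hle

theorem ae_forall_mem_of_identDistrib {Ω α ι : Type*} [MeasurableSpace Ω] [MeasurableSpace α]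
    [Countable ι] {μ : Measure Ω} {X : ι → Ω → α} {i₀ : ι}
    (hident : ∀ i, IdentDistrib (X i) (X i₀) μ μ) {S : Set α} (hS : MeasurableSet S)
    (h₀ : ∀ᵐ ω ∂μ, X i₀ ω ∈ S) : ∀ᵐ ω ∂μ, ∀ i, X i ω ∈ S :=
  ae_all_iff.2 fun i => (hident i).symm.ae_mem_snd hS h₀

theorem ProbabilityTheory.lintegral_iSup_prod_rpow_pow_le {Ω : Type*} [MeasurableSpace Ω]
    {μ : Measure Ω} [IsProbabilityMeasure μ] {Y : ℕ → Ω → ℝ≥0∞} (hY : ∀ n, Measurable (Y n))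
    (hindep : iIndepFun Y μ) (hident : ∀ n, IdentDistrib (Y n) (Y 0) μ μ)
    (hY1 : ∀ n ω, 1 ≤ Y n ω) {β : ℝ} (hβ0 : 0 < β) (hβ1 : β < 1) :
    ∫⁻ ω, ⨆ n, ∏ k ∈ range n, Y k ω ^ (β ^ k) ∂μ ≤ (∫⁻ ω, Y 0 ω ∂μ) ^ (1 - β)⁻¹ := by
  have hmeas : ∀ k, Measurable fun ω => Y k ω ^ (β ^ k) := fun k => (hY k).pow_const _
  have hmono : Monotone fun n ω => ∏ k ∈ range n, Y k ω ^ (β ^ k) := fun n m hnm ω =>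
    prod_le_prod_of_subset_of_one_le' (range_subset_range.2 hnm) fun k _ _ =>
      ENNReal.one_le_rpow (hY1 k ω) (pow_pos hβ0 k)
  have hfactor : ∀ k, ∫⁻ ω, Y k ω ^ (β ^ k) ∂μ ≤ (∫⁻ ω, Y 0 ω ∂μ) ^ (β ^ k) := fun k =>
    ((hident k).comp (measurable_id.pow_const (β ^ k))).lintegral_eq.trans_le <|
      lintegral_rpow_le_rpow_lintegral (hY 0).aemeasurable (pow_pos hβ0 k)
        (pow_le_one₀ hβ0.le hβ1.le)
  have hone : 1 ≤ ∫⁻ ω, Y 0 ω ∂μ := by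
    simpa using lintegral_mono (μ := μ) (hY1 0)
  rw [lintegral_iSup (fun n => measurable_prod _ fun k _ => hmeas k) hmono]
  refine iSup_le fun n => ?_
  calc ∫⁻ ω, ∏ k ∈ range n, Y k ω ^ (β ^ k) ∂μ
      = ∏ k ∈ range n, ∫⁻ ω, Y k ω ^ (β ^ k) ∂μ :=
        lintegral_prod_eq_prod_lintegral_of_indepFun _ _
          (hindep.comp (fun k y => y ^ (β ^ k)) fun k => measurable_id.pow_const _) hmeas
    _ ≤ ∏ k ∈ range n, (∫⁻ ω, Y 0 ω ∂μ) ^ (β ^ k) := prod_le_prod' fun k _ => hfactor k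
    _ ≤ (∫⁻ ω, Y 0 ω ∂μ) ^ (1 - β)⁻¹ :=
        ENNReal.prod_rpow_pow_le_rpow_inv_one_sub hone hβ0.le hβ1 n

/-- If `|M| ≤ β < 1` a.s. for some `β ∈ (0,1)` and `E e^{s|Q|} < ∞` for some `s > 0`,
then `E exp(s Σ_{k≥1} |Π_{k-1} Q_k|) < ∞`; in particular the perpetuity series
converges almost surely and `E e^{s|Z∞|} < ∞`. -/
theorem perpetuity_exponential_moment_contractive
    {Ω : Type*} [MeasurableSpace Ω] (μ : Measure Ω) [IsProbabilityMeasure μ]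
    (M Q : ℕ → Ω → ℝ)
    (hM : ∀ n, Measurable (M n)) (hQ : ∀ n, Measurable (Q n))
    (hindep : iIndepFun (fun n ω => (M n ω, Q n ω)) μ)
    (hident : ∀ n, IdentDistrib (fun ω => (M n ω, Q n ω)) (fun ω => (M 0 ω, Q 0 ω)) μ μ)
    (hβ : ∃ β : ℝ, β ∈ Set.Ioo (0 : ℝ) 1 ∧ μ {ω | |M 0 ω| ≤ β} = 1)
    (s : ℝ) (hs : 0 < s)
    (hQexp : ∫⁻ ω, ENNReal.ofReal (Real.exp (s * |Q 0 ω|)) ∂μ < ⊤) :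
    (∫⁻ ω, ⨆ n, ENNReal.ofReal
        (Real.exp (s * ∑ k ∈ Finset.range n,
          |(∏ i ∈ Finset.range k, M i ω) * Q k ω|)) ∂μ < ⊤) ∧
    ∃ Z : Ω → ℝ,
      (∀ᵐ ω ∂μ, Tendsto
        (fun n => ∑ k ∈ Finset.range n, (∏ i ∈ Finset.range k, M i ω) * Q k ω)
        atTop (nhds (Z ω))) ∧
      ∫⁻ ω, ENNReal.ofReal (Real.exp (s * |Z ω|)) ∂μ < ⊤ := by
  obtain ⟨β, ⟨hβ0, hβ1⟩, hMβ⟩ := hβ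
  set F : Ω → ℝ≥0∞ := fun ω => ⨆ n, ENNReal.ofReal
    (exp (s * ∑ k ∈ range n, |(∏ i ∈ range k, M i ω) * Q k ω|))
  have hMβ_ae : ∀ᵐ ω ∂μ, ∀ n, |M n ω| ≤ β :=
    ae_forall_mem_of_identDistrib (S := {x | |x| ≤ β}) (fun n => (hident n).comp measurable_fst)
      (measurableSet_le continuous_abs.measurable measurable_const)
      ((mem_ae_iff_prob_eq_one (measurableSet_le (hM 0).abs measurable_const)).2 hMβ)
  have hbound : ∫⁻ ω, F ω ∂μ ≤ (∫⁻ ω, ENNReal.ofReal (exp (s * |Q 0 ω|)) ∂μ) ^ (1 - β)⁻¹ :=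
    calc ∫⁻ ω, F ω ∂μ
        ≤ ∫⁻ ω, ⨆ n, ∏ k ∈ range n, ENNReal.ofReal (exp (s * |Q k ω|)) ^ (β ^ k) ∂μ :=
          lintegral_mono_ae <| hMβ_ae.mono fun ω hω => iSup_mono fun n => by
            rw [← ENNReal.ofReal_exp_mul_sum_pow_mul s β hβ0.le]
            gcongr ENNReal.ofReal (exp (s * ?_))
            exact sum_abs_prod_mul_le_sum_pow_mul_abs hω n
      _ ≤ _ := lintegral_iSup_prod_rpow_pow_le (by fun_prop)
          (hindep.comp (fun _ p => ENNReal.ofReal (exp (s * |p.2|))) fun _ => by fun_prop)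
          (fun n => (hident n).comp (by fun_prop))
          (fun n ω => by simpa using mul_nonneg hs.le (abs_nonneg (Q n ω))) hβ0 hβ1
  have hfin : ∫⁻ ω, F ω ∂μ < ⊤ := hbound.trans_lt <|
    ENNReal.rpow_lt_top_of_nonneg (inv_nonneg.2 (sub_nonneg.2 hβ1.le)) hQexp.ne
  have hsummable : ∀ᵐ ω ∂μ, Summable fun k => (∏ i ∈ range k, M i ω) * Q k ω :=
    (ae_lt_top (by fun_prop) hfin.ne).mono fun ω hω =>
      summable_of_iSup_ofReal_exp_ne_top hs hω.ne
  exact ⟨hfin, fun ω => ∑' k, (∏ i ∈ range k, M i ω) * Q k ω,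
    hsummable.mono fun ω h => h.hasSum.tendsto_sum_nat,
    (lintegral_mono fun ω => ofReal_exp_abs_tsum_le_iSup hs.le).trans_lt hfin⟩
end
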